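/- arXiv:2501.02596 — 5 statements merged into one kernel-verified Lean document; each statement's English description precedes it below -/
import Mathlib

section
/- Fix k, p, q with τ > q. There is a constant C = C(k, p, q) such that for every n and every intersecting family F ⊆ binomial([n],k) with covering number τ(F) = τ > q, we have β_{p,q}(F) ≤ C · n^{k - p - τ}. -/
/-- A family of finite sets is intersecting if any two members meet. -/
def Intersecting (F : Finset (Finset ℕ)) : Prop :=
  ∀ A ∈ F, ∀ B ∈ F, (A ∩ B).Nonempty

/-- `X` is a cover (transversal) of `F`: it meets every member. -/
def IsCover (F : Finset (Finset ℕ)) (X : Finset ℕ) : Prop :=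
  ∀ A ∈ F, (X ∩ A).Nonempty

/-- `X` is a minimal cover of `F`. -/
def IsMinCover (F : Finset (Finset ℕ)) (X : Finset ℕ) : Prop :=
  IsCover F X ∧ ∀ Y ⊂ X, ¬ IsCover F Y

/-- The covering number `τ(F)`: minimum size of a cover. -/
noncomputable def coverNum (F : Finset (Finset ℕ)) : ℕ :=
  sInf {m | ∃ X : Finset ℕ, X.card = m ∧ IsCover F X}

/-- `F(A, B̄)`: members of `F` containing `A` and disjoint from `B`. -/
def famAB (F : Finset (Finset ℕ)) (A B : Finset ℕ) : Finset (Finset ℕ) :=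
  F.filter fun S => A ⊆ S ∧ Disjoint B S

/-- The `(p,q)`-dömdödöm of `F` with ground set `[n]` (here `Finset.range n`):
the minimum of `|F(A, B̄)|` over disjoint `A, B ⊆ [n]` with `|A| = p`, `|B| = q`. -/
noncomputable def beta (n p q : ℕ) (F : Finset (Finset ℕ)) : ℕ :=
  sInf {m | ∃ A B : Finset ℕ, A ⊆ Finset.range n ∧ B ⊆ Finset.range n ∧
    Disjoint A B ∧ A.card = p ∧ B.card = q ∧ m = (famAB F A B).card}

/-!
Every member `S` of an intersecting family `F` is a cover, and a set `A` with `|A| < τ(F)` is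
not, so some member is disjoint from `A`, while every member containing `A` meets it. Branching
on the element of that member gives `|F(A)| ≤ k^(τ-|A|) · C(n, k-τ)` for the members `F(A)`
containing `A`; in particular `|F| ≤ k^τ n^(k-τ)`. Double counting the pairs `A ⊆ S ∈ F` with
`|A| = p` yields some `A` with `C(n,p) |F(A)| ≤ C(k,p) |F|`, and any `q`-set `B` disjoint from
`A` gives `β_{p,q}(F) ≤ |F(A)|`. Finally `C(n,p) ≥ (n/p)^p`.
-/

open Finset

namespace Nat

lemma pow_le_pow_mul_choose {n p : ℕ} (hp : p ≤ n) : n ^ p ≤ p ^ p * n.choose p := by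
  have hprod : n ^ p * p.descFactorial p ≤ p ^ p * n.descFactorial p := by
    -- factorwise `n / p ≤ (n - i) / (p - i)`
    rw [descFactorial_eq_prod_range, descFactorial_eq_prod_range,
      show n ^ p = ∏ _i ∈ range p, n by simp, show p ^ p = ∏ _i ∈ range p, p by simp,
      ← prod_mul_distrib, ← prod_mul_distrib]
    refine prod_le_prod' fun i hi => ?_
    have hip : i < p := mem_range.1 hi
    zify [hip.le, hip.le.trans hp]
    nlinarith
  rw [descFactorial_self, descFactorial_eq_factorial_mul_choose, mul_comm (n ^ p),
    mul_left_comm] at hprod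
  exact Nat.le_of_mul_le_mul_left hprod p.factorial_pos

end Nat

section Covers

variable {F : Finset (Finset ℕ)}

lemma coverNum_le_card {X : Finset ℕ} (hX : IsCover F X) : coverNum F ≤ #X :=
  Nat.sInf_le ⟨X, rfl, hX⟩

lemma Intersecting.isCover_of_mem (hint : Intersecting F) {S : Finset ℕ} (hS : S ∈ F) :
    IsCover F S :=
  fun A hA => hint S hS A hA

lemma card_filter_superset_le_choose {U : Finset ℕ} {k : ℕ} (hF : F ⊆ U.powersetCard k)
    (A : Finset ℕ) : #{S ∈ F | A ⊆ S} ≤ (#U).choose (k - #A) := by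
  rw [← card_powersetCard]
  refine card_le_card_of_injOn (· \ A) (fun S hS => ?_) (fun S hS T hT hST => ?_)
  · obtain ⟨hSF, hAS⟩ := mem_filter.1 hS
    obtain ⟨hSU, hSk⟩ := mem_powersetCard.1 (hF hSF)
    exact mem_powersetCard.2 ⟨sdiff_subset.trans hSU, by rw [card_sdiff_of_subset hAS, hSk]⟩
  · rw [← sdiff_union_of_subset (mem_filter.1 hS).2, ← sdiff_union_of_subset (mem_filter.1 hT).2]
    exact congrArg (· ∪ A) hST

lemma Intersecting.card_filter_superset_le {U : Finset ℕ} {k : ℕ} (hint : Intersecting F)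
    (hF : F ⊆ U.powersetCard k) (d : ℕ) :
    ∀ A : Finset ℕ, #A + d = coverNum F →
      #{S ∈ F | A ⊆ S} ≤ k ^ d * (#U).choose (k - coverNum F) := by
  induction d with
  | zero =>
    intro A hA
    simpa [← hA] using card_filter_superset_le_choose hF A
  | succ d ih =>
    intro A hA
    obtain ⟨S, hSF, hAS⟩ : ∃ S ∈ F, Disjoint A S := by
      by_contra! h
      have := coverNum_le_card fun S hS => not_disjoint_iff_nonempty_inter.1 (h S hS)
      omega
    have hsub : {M ∈ F | A ⊆ M} ⊆ S.biUnion fun x => {M ∈ F | insert x A ⊆ M} := by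
      intro M hM
      obtain ⟨hMF, hAM⟩ := mem_filter.1 hM
      obtain ⟨x, hx⟩ := hint M hMF S hSF
      obtain ⟨hxM, hxS⟩ := mem_inter.1 hx
      exact mem_biUnion.2 ⟨x, hxS, mem_filter.2 ⟨hMF, insert_subset hxM hAM⟩⟩
    calc #{M ∈ F | A ⊆ M}
        ≤ #S * (k ^ d * (#U).choose (k - coverNum F)) := by
          refine (card_le_card hsub).trans (card_biUnion_le_card_mul _ _ _ fun x hx => ih _ ?_)
          rw [card_insert_of_notMem (disjoint_right.1 hAS hx)]
          omega
      _ = k ^ (d + 1) * (#U).choose (k - coverNum F) := by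
          rw [(mem_powersetCard.1 (hF hSF)).2]
          ring

lemma Intersecting.card_le {U : Finset ℕ} {k : ℕ} (hint : Intersecting F)
    (hF : F ⊆ U.powersetCard k) : #F ≤ k ^ coverNum F * (#U).choose (k - coverNum F) := by
  simpa using hint.card_filter_superset_le hF (coverNum F) ∅ (by simp)

lemma exists_choose_mul_card_filter_superset_le {U : Finset ℕ} {k p : ℕ}
    (hF : F ⊆ U.powersetCard k) (hp : p ≤ #U) :
    ∃ A ∈ U.powersetCard p, (#U).choose p * #{S ∈ F | A ⊆ S} ≤ #F * k.choose p := by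
  have hsum : ∑ A ∈ U.powersetCard p, #{S ∈ F | A ⊆ S} = #F * k.choose p := by
    change ∑ A ∈ U.powersetCard p, #(F.bipartiteAbove (· ⊆ ·) A) = _
    rw [sum_card_bipartiteAbove_eq_sum_card_bipartiteBelow, ← smul_eq_mul, ← sum_const]
    refine sum_congr rfl fun S hS => ?_
    obtain ⟨hSU, hSk⟩ := mem_powersetCard.1 (hF hS)
    have : (U.powersetCard p).bipartiteBelow (· ⊆ ·) S = S.powersetCard p := by
      ext A
      simp only [mem_bipartiteBelow, mem_powersetCard]
      exact ⟨fun h => ⟨h.2, h.1.2⟩, fun h => ⟨⟨h.1.trans hSU, h.2⟩, h.1⟩⟩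
    rw [this, card_powersetCard, hSk]
  refine exists_le_of_sum_le (powersetCard_nonempty.2 hp) (le_of_eq ?_)
  rw [← mul_sum, hsum, sum_const, card_powersetCard, smul_eq_mul]

end Covers

section Beta

variable {n p q : ℕ}

lemma beta_empty : beta n p q ∅ = 0 := by
  refine Nat.sInf_eq_zero.2 (or_iff_not_imp_right.2 fun hne => ?_)
  obtain ⟨m, A, B, hA, hB, hAB, hAp, hBq, -⟩ := Set.nonempty_iff_ne_empty.2 hne
  exact ⟨A, B, hA, hB, hAB, hAp, hBq, by simp [famAB]⟩

lemma beta_eq_zero_of_lt (F : Finset (Finset ℕ)) (h : n < p + q) : beta n p q F = 0 := by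
  refine Nat.sInf_eq_zero.2 (Or.inr (Set.eq_empty_iff_forall_notMem.2 ?_))
  rintro m ⟨A, B, hA, hB, hAB, rfl, rfl, -⟩
  have := card_le_card (union_subset hA hB)
  rw [card_union_of_disjoint hAB, card_range] at this
  omega

lemma beta_le_card_filter_superset (F : Finset (Finset ℕ)) {A : Finset ℕ}
    (hA : A ⊆ range n) (hAp : #A = p) (hn : p + q ≤ n) :
    beta n p q F ≤ #{S ∈ F | A ⊆ S} := by
  obtain ⟨B, hB, hBq⟩ : ∃ B ⊆ range n \ A, #B = q := by
    apply exists_subset_card_eq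
    rw [card_sdiff_of_subset hA, card_range]
    omega
  have hAB : Disjoint A B := disjoint_right.2 fun _ hb => (mem_sdiff.1 (hB hb)).2
  calc beta n p q F ≤ #(famAB F A B) :=
        Nat.sInf_le ⟨A, B, hA, hB.trans sdiff_subset, hAB, hAp, hBq, rfl⟩
    _ ≤ #{S ∈ F | A ⊆ S} := card_le_card (monotone_filter_right _ fun _ _ h => h.1)

lemma beta_mul_pow_le {k : ℕ} {F : Finset (Finset ℕ)} (hint : Intersecting F)
    (hF : F ⊆ (range n).powersetCard k) (hk : 0 < k) (hτk : coverNum F ≤ k) (hn : p + q ≤ n) :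
    beta n p q F * n ^ p ≤ k ^ k * 2 ^ k * p ^ p * n ^ (k - coverNum F) := by
  obtain ⟨A, hA, hAvg⟩ := exists_choose_mul_card_filter_superset_le (p := p) hF
    (by rw [card_range]; omega)
  rw [card_range] at hAvg
  obtain ⟨hAn, hAp⟩ := mem_powersetCard.1 hA
  calc beta n p q F * n ^ p
      ≤ #{S ∈ F | A ⊆ S} * (p ^ p * n.choose p) :=
        Nat.mul_le_mul (beta_le_card_filter_superset F hAn hAp hn)
          (Nat.pow_le_pow_mul_choose (by omega))
    _ = p ^ p * (n.choose p * #{S ∈ F | A ⊆ S}) := by ring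
    _ ≤ p ^ p * (k ^ coverNum F * n.choose (k - coverNum F) * k.choose p) := by
        have := hint.card_le hF
        rw [card_range] at this
        exact Nat.mul_le_mul_left _ (hAvg.trans (Nat.mul_le_mul_right _ this))
    _ ≤ p ^ p * (k ^ k * n ^ (k - coverNum F) * 2 ^ k) := by
        gcongr
        · exact Nat.choose_le_pow n _
        · exact Nat.choose_le_two_pow k p
    _ = k ^ k * 2 ^ k * p ^ p * n ^ (k - coverNum F) := by ring

end Beta

lemma cast_le_mul_zpow_of_mul_pow_le {b K n p a : ℕ} (hn : 0 < n) (h : b * n ^ p ≤ K * n ^ a) :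
    (b : ℝ) ≤ K * (n : ℝ) ^ ((a : ℤ) - p) := by
  have hn' : (0 : ℝ) < n := Nat.cast_pos.2 hn
  rw [zpow_sub₀ hn'.ne', zpow_natCast, zpow_natCast, ← mul_div_assoc, le_div_iff₀ (by positivity)]
  exact_mod_cast h

theorem beta_upper_coverNum_general (k p q τ : ℕ) :
    ∃ C : ℝ, 0 < C ∧ ∀ n : ℕ, ∀ F : Finset (Finset ℕ),
      F ⊆ (Finset.range n).powersetCard k → Intersecting F → coverNum F = τ →
      (beta n p q F : ℝ) ≤ C * (n : ℝ) ^ ((k : ℤ) - (p : ℤ) - (τ : ℤ)) := by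
  refine ⟨(k ^ k * 2 ^ k * p ^ p : ℕ),
    Nat.cast_pos.2 (Nat.mul_pos (Nat.mul_pos Nat.pow_self_pos (by positivity)) Nat.pow_self_pos), ?_⟩
  rintro n F hF hint rfl
  rcases F.eq_empty_or_nonempty with rfl | ⟨S, hS⟩
  · rw [beta_empty, Nat.cast_zero]
    positivity
  obtain ⟨hSn, hSk⟩ := mem_powersetCard.1 (hF hS)
  have hk : 0 < k := hSk ▸ card_pos.2 (by simpa using hint S hS S hS)
  have hn : 0 < n := hk.trans_le (by simpa [hSk] using card_le_card hSn)
  have hτk : coverNum F ≤ k := hSk ▸ coverNum_le_card (hint.isCover_of_mem hS)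
  rcases le_or_gt (p + q) n with hpq | hpq
  · rw [show (k : ℤ) - p - coverNum F = ((k - coverNum F : ℕ) : ℤ) - p by omega]
    exact cast_le_mul_zpow_of_mul_pow_le hn (beta_mul_pow_le hint hF hk hτk hpq)
  · rw [beta_eq_zero_of_lt F hpq, Nat.cast_zero]
    positivity

/-- For fixed k, p, q and τ > q, there is C = C(k,p,q) with
β_{p,q}(F) ≤ C · n^(k-p-τ) for every intersecting F ⊆ binom([n],k) with τ(F) = τ. -/
theorem beta_upper_coverNum (k p q τ : ℕ) (hτ : q < τ) :
    ∃ C : ℝ, 0 < C ∧ ∀ n : ℕ, ∀ F : Finset (Finset ℕ),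
      F ⊆ (Finset.range n).powersetCard k → Intersecting F → coverNum F = τ →
      (beta n p q F : ℝ) ≤ C * (n : ℝ) ^ ((k : ℤ) - (p : ℤ) - (τ : ℤ)) :=
  beta_upper_coverNum_general k p q τ
end

section
/- Fix p, q, k with p + q < k. There exist constants c, C > 0 such that for all sufficiently large n: (i) there exists an intersecting family F ⊆ binomial([n],k) with β_{p,q}(F) ≥ c · n^{k-1-p-q}, and (ii) every intersecting family F ⊆ binomial([n],k) satisfies β_{p,q}(F) ≤ C · n^{k-1-p-q}. -/
open Finset
open scoped Nat

lemma card_filter_powersetCard_superset_le {α : Type*} [DecidableEq α] (s t : Finset α) (k : ℕ) :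
    #((t.powersetCard k).filter (s ⊆ ·)) ≤ (#t).choose (k - #s) := by
  have hmaps : ∀ S ∈ (t.powersetCard k).filter (s ⊆ ·), S \ s ∈ t.powersetCard (k - #s) := by
    intro S hS
    rw [mem_filter, mem_powersetCard] at hS
    exact mem_powersetCard.2 ⟨sdiff_subset.trans hS.1.1, by rw [card_sdiff_of_subset hS.2, hS.1.2]⟩
  have hinj : Set.InjOn (· \ s) ((t.powersetCard k).filter (s ⊆ ·) : Set (Finset α)) := by
    intro S hS T hT hST
    simp only [coe_filter, Set.mem_ofPred_eq] at hS hT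
    rw [← sdiff_union_of_subset hS.2, ← sdiff_union_of_subset hT.2]
    exact congrArg (· ∪ s) hST
  simpa only [card_powersetCard] using card_le_card_of_injOn _ hmaps hinj

lemma pow_le_mul_choose_sub {n M e : ℕ} (h : 2 * (M + e) ≤ n) :
    n ^ e ≤ 2 ^ e * e ! * (n - M).choose e :=
  calc n ^ e ≤ (2 * (n - M + 1 - e)) ^ e := Nat.pow_le_pow_left (by omega) e
    _ = 2 ^ e * (n - M + 1 - e) ^ e := Nat.mul_pow 2 _ e
    _ ≤ 2 ^ e * (n - M).descFactorial e := Nat.mul_le_mul_left _ (Nat.pow_sub_le_descFactorial _ e)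
    _ = 2 ^ e * e ! * (n - M).choose e := by
      rw [Nat.descFactorial_eq_factorial_mul_choose, mul_assoc]

lemma exists_subset_range_disjoint_card_eq {n m : ℕ} (W : Finset ℕ) (h : #W + m ≤ n) :
    ∃ A ⊆ range n, Disjoint A W ∧ #A = m := by
  have hbig : m ≤ #(range n \ W) := by
    have := le_card_sdiff W (range n)
    rw [card_range] at this
    omega
  obtain ⟨A, hA, hAm⟩ := exists_subset_card_eq hbig
  exact ⟨A, hA.trans sdiff_subset, disjoint_of_subset_left hA sdiff_disjoint, hAm⟩

section Beta

variable {n p q k : ℕ} {F : Finset (Finset ℕ)}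

lemma beta_le_card_famAB {A B : Finset ℕ} (hA : A ⊆ range n) (hB : B ⊆ range n)
    (hAB : Disjoint A B) (hAp : #A = p) (hBq : #B = q) :
    beta n p q F ≤ #(famAB F A B) :=
  Nat.sInf_le ⟨A, B, hA, hB, hAB, hAp, hBq, rfl⟩

lemma le_beta {m : ℕ} (hn : p + q ≤ n)
    (hm : ∀ A B : Finset ℕ, A ⊆ range n → B ⊆ range n → Disjoint A B → #A = p → #B = q →
      m ≤ #(famAB F A B)) :
    m ≤ beta n p q F := by
  obtain ⟨B, hB, -, hBq⟩ := exists_subset_range_disjoint_card_eq (n := n) (m := q) ∅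
    (by rw [card_empty]; omega)
  obtain ⟨A, hA, hAB, hAp⟩ := exists_subset_range_disjoint_card_eq (n := n) (m := p) B (by omega)
  refine le_csInf ⟨_, A, B, hA, hB, hAB, hAp, hBq, rfl⟩ ?_
  rintro _ ⟨A, B, hA, hB, hAB, hAp, hBq, rfl⟩
  exact hm A B hA hB hAB hAp hBq

lemma beta_eq_zero_of_isCover (hn : p + q ≤ n) (hF : ∀ S ∈ F, S ⊆ range n) {Z : Finset ℕ}
    (hZ : IsCover F Z) (hZq : #Z ≤ q) :
    beta n p q F = 0 := by
  obtain ⟨B, hZB, hB, hBq⟩ := exists_subsuperset_card_eq (inter_subset_right : Z ∩ range n ⊆ _)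
    ((card_le_card inter_subset_left).trans hZq) (by rw [card_range]; omega)
  obtain ⟨A, hA, hAB, hAp⟩ := exists_subset_range_disjoint_card_eq (n := n) (m := p) B (by omega)
  have hempty : famAB F A B = ∅ := by
    refine filter_false_of_mem fun S hS ⟨_, hBS⟩ => ?_
    obtain ⟨x, hx⟩ := hZ S hS
    rw [mem_inter] at hx
    exact disjoint_left.1 hBS (hZB (mem_inter.2 ⟨hx.1, hF S hS hx.2⟩)) hx.2
  have := beta_le_card_famAB (F := F) hA hB hAB hAp hBq
  rw [hempty, card_empty] at this
  omega

lemma beta_le_of_le_card_inter {W : Finset ℕ} (hF : F ⊆ (range n).powersetCard k)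
    (hW : ∀ S ∈ F, q + 1 ≤ #(S ∩ W)) (hn : #W + p + q ≤ n) :
    beta n p q F ≤ (#W).choose (q + 1) * n ^ (k - 1 - p - q) := by
  obtain ⟨B, hB, hBW, hBq⟩ := exists_subset_range_disjoint_card_eq (n := n) (m := q) W (by omega)
  obtain ⟨A, hA, hAWB, hAp⟩ := exists_subset_range_disjoint_card_eq (n := n) (m := p) (W ∪ B)
    (by have := card_union_le W B; omega)
  rw [disjoint_union_right] at hAWB
  have hcover : famAB F A B ⊆ (W.powersetCard (q + 1)).biUnion
      fun U => ((range n).powersetCard k).filter (A ∪ U ⊆ ·) := by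
    intro S hS
    rw [famAB, mem_filter] at hS
    obtain ⟨U, hU, hUq⟩ := exists_subset_card_eq (hW S hS.1)
    refine mem_biUnion.2 ⟨U, mem_powersetCard.2 ⟨hU.trans inter_subset_right, hUq⟩, ?_⟩
    exact mem_filter.2 ⟨hF hS.1, union_subset hS.2.1 (hU.trans inter_subset_left)⟩
  have hterm : ∀ U ∈ W.powersetCard (q + 1),
      #(((range n).powersetCard k).filter (A ∪ U ⊆ ·)) ≤ n ^ (k - 1 - p - q) := by
    intro U hU
    rw [mem_powersetCard] at hU
    have hAU : #(A ∪ U) = p + (q + 1) := by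
      rw [card_union_of_disjoint (hAWB.1.mono_right hU.1), hAp, hU.2]
    calc _ ≤ (#(range n)).choose (k - #(A ∪ U)) := card_filter_powersetCard_superset_le _ _ _
      _ ≤ n ^ (k - 1 - p - q) := by
        rw [card_range, hAU, show k - (p + (q + 1)) = k - 1 - p - q by omega]
        exact Nat.choose_le_pow _ _
  calc beta n p q F ≤ #(famAB F A B) := beta_le_card_famAB hA hB hAWB.2 hAp hBq
    _ ≤ _ := (card_le_card hcover).trans (card_biUnion_le_card_mul _ _ _ hterm)
    _ = (#W).choose (q + 1) * n ^ (k - 1 - p - q) := by rw [card_powersetCard]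

end Beta

section Transversal

variable {k : ℕ} {F : Finset (Finset ℕ)}

lemma exists_le_card_inter_succ {i : ℕ} (hk : ∀ S ∈ F, #S ≤ k) (hF : Intersecting F)
    (hcov : ∀ Z : Finset ℕ, #Z ≤ i + 1 → ¬ IsCover F Z) {W : Finset ℕ}
    (hW : ∀ S ∈ F, i + 1 ≤ #(S ∩ W)) :
    ∃ W', #W' ≤ #W + (#W).choose (i + 1) * k ∧ ∀ S ∈ F, i + 2 ≤ #(S ∩ W') := by
  have havoid : ∀ σ ∈ W.powersetCard (i + 1), ∃ T ∈ F, Disjoint σ T := by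
    intro σ hσ
    have := hcov σ (mem_powersetCard.1 hσ).2.le
    simp only [IsCover, not_forall, not_nonempty_iff_eq_empty, exists_prop] at this
    obtain ⟨T, hT, hσT⟩ := this
    exact ⟨T, hT, disjoint_iff_inter_eq_empty.2 hσT⟩
  choose! T hTF hσT using havoid
  refine ⟨W ∪ (W.powersetCard (i + 1)).biUnion T, ?_, fun S hS => ?_⟩
  · have := card_biUnion_le_card_mul (W.powersetCard (i + 1)) T k fun σ hσ => hk _ (hTF σ hσ)
    rw [card_powersetCard] at this
    exact (card_union_le _ _).trans (by omega)
  have hmono : S ∩ W ⊆ S ∩ (W ∪ (W.powersetCard (i + 1)).biUnion T) :=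
    inter_subset_inter_left subset_union_left
  rcases (hW S hS).lt_or_eq with hlt | heq
  · exact (card_le_card hmono).trans' hlt
  -- `S` meets `W` in exactly `i + 1` points; the member avoiding them meets `S` outside `W`.
  have hσ : S ∩ W ∈ W.powersetCard (i + 1) := mem_powersetCard.2 ⟨inter_subset_right, heq.symm⟩
  obtain ⟨y, hy⟩ := hF S hS _ (hTF _ hσ)
  rw [mem_inter] at hy
  have hyW : y ∉ S ∩ W := fun h => disjoint_left.1 (hσT _ hσ) h hy.2
  have hins : insert y (S ∩ W) ⊆ S ∩ (W ∪ (W.powersetCard (i + 1)).biUnion T) :=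
    insert_subset (mem_inter.2 ⟨hy.1, mem_union_right _ (mem_biUnion.2 ⟨_, hσ, hy.2⟩)⟩) hmono
  have := card_le_card hins
  rw [card_insert_of_notMem hyW] at this
  omega

lemma exists_bounded_le_card_inter (k i : ℕ) :
    ∃ N : ℕ, ∀ F : Finset (Finset ℕ), (∀ S ∈ F, #S ≤ k) → Intersecting F →
      (∀ Z : Finset ℕ, #Z ≤ i → ¬ IsCover F Z) → ∃ W, #W ≤ N ∧ ∀ S ∈ F, i + 1 ≤ #(S ∩ W) := by
  induction i with
  | zero =>
    refine ⟨k, fun F hk hF hcov => ?_⟩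
    obtain ⟨S₀, hS₀, -⟩ : ∃ S₀ ∈ F, ¬ (∅ ∩ S₀).Nonempty := by
      simpa [IsCover] using hcov ∅ le_rfl
    exact ⟨S₀, hk S₀ hS₀, fun S hS => card_pos.2 (hF S hS S₀ hS₀)⟩
  | succ i ih =>
    obtain ⟨N, hN⟩ := ih
    refine ⟨N + N.choose (i + 1) * k, fun F hk hF hcov => ?_⟩
    obtain ⟨W, hWN, hW⟩ := hN F hk hF fun Z hZ => hcov Z (by omega)
    obtain ⟨W', hW'card, hW'⟩ := exists_le_card_inter_succ hk hF hcov hW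
    refine ⟨W', hW'card.trans ?_, hW'⟩
    gcongr

end Transversal

lemma exists_forall_beta_le_choose_mul_pow (p q k : ℕ) :
    ∃ N : ℕ, ∀ n (F : Finset (Finset ℕ)), N + p + q ≤ n → F ⊆ (range n).powersetCard k →
      Intersecting F → beta n p q F ≤ N.choose (q + 1) * n ^ (k - 1 - p - q) := by
  obtain ⟨N, hN⟩ := exists_bounded_le_card_inter k q
  refine ⟨N, fun n F hn hF hFint => ?_⟩
  by_cases hcov : ∃ Z, #Z ≤ q ∧ IsCover F Z
  · obtain ⟨Z, hZq, hZ⟩ := hcov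
    rw [beta_eq_zero_of_isCover (by omega) (fun S hS => (mem_powersetCard.1 (hF hS)).1) hZ hZq]
    exact Nat.zero_le _
  push Not at hcov
  obtain ⟨W, hWN, hW⟩ := hN F (fun S hS => (mem_powersetCard.1 (hF hS)).2.le) hFint hcov
  exact (beta_le_of_le_card_inter hF hW (by omega)).trans
    (Nat.mul_le_mul_right _ (Nat.choose_le_choose _ hWN))

section Majority

def majorityFamily (n q k : ℕ) : Finset (Finset ℕ) :=
  ((range n).powersetCard k).filter fun S => q + 1 ≤ #(S ∩ range (2 * q + 1))

variable {n p q k : ℕ}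

lemma majorityFamily_subset : majorityFamily n q k ⊆ (range n).powersetCard k :=
  filter_subset _ _

lemma intersecting_majorityFamily : Intersecting (majorityFamily n q k) := by
  intro S hS T hT
  rw [majorityFamily, mem_filter] at hS hT
  by_contra hST
  have hdisj : Disjoint (S ∩ range (2 * q + 1)) (T ∩ range (2 * q + 1)) :=
    disjoint_left.2 fun x hxS hxT =>
      hST ⟨x, mem_inter.2 ⟨(mem_inter.1 hxS).1, (mem_inter.1 hxT).1⟩⟩
  have := card_le_card (union_subset inter_subset_right inter_subset_right :
    S ∩ range (2 * q + 1) ∪ T ∩ range (2 * q + 1) ⊆ range (2 * q + 1))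
  rw [card_union_of_disjoint hdisj, card_range] at this
  omega

lemma choose_le_card_famAB_majorityFamily (hk : p + q < k) (hn : p + 2 * q + 1 ≤ n)
    {A B : Finset ℕ} (hA : A ⊆ range n) (hB : B ⊆ range n) (hAB : Disjoint A B)
    (hAp : #A = p) (hBq : #B = q) :
    (n - (p + 2 * q + 1)).choose (k - 1 - p - q) ≤ #(famAB (majorityFamily n q k) A B) := by
  have hD : q + 1 ≤ #(range (2 * q + 1) \ B) := by
    have := le_card_sdiff B (range (2 * q + 1))
    rw [card_range] at this
    omega
  obtain ⟨U, hU, hUq⟩ := exists_subset_card_eq hD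
  have hV : #(range n \ B) = n - q := by rw [card_sdiff_of_subset hB, card_range, hBq]
  have hAU : A ∪ U ⊆ range n \ B := union_subset (subset_sdiff.2 ⟨hA, hAB⟩)
    (hU.trans (sdiff_subset_sdiff (range_subset_range.2 (by omega)) le_rfl))
  obtain ⟨X, hAUX, hX, hXcard⟩ := exists_subsuperset_card_eq hAU
    ((card_union_le A U).trans (by omega)) (by omega : p + q + 1 ≤ #(range n \ B))
  have hsub : ((range n \ B).powersetCard k).filter (X ⊆ ·) ⊆ famAB (majorityFamily n q k) A B := by
    intro S hS
    simp only [mem_filter, mem_powersetCard, subset_sdiff] at hS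
    have hUS : U ⊆ S ∩ range (2 * q + 1) :=
      subset_inter ((subset_union_right.trans hAUX).trans hS.2) (hU.trans sdiff_subset)
    refine mem_filter.2 ⟨mem_filter.2 ⟨mem_powersetCard.2 ⟨hS.1.1.1, hS.1.2⟩, ?_⟩,
      (subset_union_left.trans hAUX).trans hS.2, hS.1.1.2.symm⟩
    exact hUq ▸ card_le_card hUS
  calc (n - (p + 2 * q + 1)).choose (k - 1 - p - q)
      = (#(range n \ B) - #X).choose (k - #X) := by rw [hV, hXcard]; congr 1 <;> omega
    _ = #(((range n \ B).powersetCard k).filter (X ⊆ ·)) :=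
      (card_filter_powersetCard_subset X _ k hX (by omega)).symm
    _ ≤ #(famAB (majorityFamily n q k) A B) := card_le_card hsub

lemma choose_le_beta_majorityFamily (hk : p + q < k) (hn : p + 2 * q + 1 ≤ n) :
    (n - (p + 2 * q + 1)).choose (k - 1 - p - q) ≤ beta n p q (majorityFamily n q k) :=
  le_beta (by omega) fun _ _ hA hB hAB hAp hBq =>
    choose_le_card_famAB_majorityFamily hk hn hA hB hAB hAp hBq

end Majority

/-- If p + q < k then β_{p,q}(n,k) = Θ(n^(k-1-p-q)). -/
theorem beta_order_of_magnitude (p q k : ℕ) (h : p + q < k) :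
    ∃ c C : ℝ, 0 < c ∧ 0 < C ∧ ∃ n₀ : ℕ, ∀ n ≥ n₀,
      (∃ F : Finset (Finset ℕ), F ⊆ (Finset.range n).powersetCard k ∧ Intersecting F ∧
        c * (n : ℝ) ^ (k - 1 - p - q) ≤ (beta n p q F : ℝ)) ∧
      (∀ F : Finset (Finset ℕ), F ⊆ (Finset.range n).powersetCard k → Intersecting F →
        (beta n p q F : ℝ) ≤ C * (n : ℝ) ^ (k - 1 - p - q)) := by
  obtain ⟨N, hN⟩ := exists_forall_beta_le_choose_mul_pow p q k
  set e := k - 1 - p - q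
  refine ⟨((2 ^ e * e ! : ℕ) : ℝ)⁻¹, N.choose (q + 1) + 1, by positivity, by positivity,
    2 * (p + 2 * q + 1 + e) + N + p + q, fun n hn => ⟨?_, fun F hF hFint => ?_⟩⟩
  · refine ⟨majorityFamily n q k, majorityFamily_subset, intersecting_majorityFamily, ?_⟩
    have hpow := (pow_le_mul_choose_sub (n := n) (M := p + 2 * q + 1) (e := e) (by omega)).trans
      (Nat.mul_le_mul_left _ (choose_le_beta_majorityFamily h (by omega)))
    rw [inv_mul_le_iff₀ (by positivity)]
    exact_mod_cast hpow
  · have hbeta := hN n F (by omega) hF hFint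
    calc (beta n p q F : ℝ) ≤ N.choose (q + 1) * (n : ℝ) ^ e := by exact_mod_cast hbeta
      _ ≤ (N.choose (q + 1) + 1) * (n : ℝ) ^ e := by gcongr; linarith
end

section
/- Let F be a 3-uniform intersecting family on ground set exactly [6] (every vertex is used) with β_{0,2}(F) ≥ 2. Then |F| = 10 and F contains exactly one triple from each complementary pair {T, [6]\T} of 3-subsets of [6]. -/
open Finset

theorem Intersecting.not_disjoint {F : Finset (Finset ℕ)} (hF : Intersecting F) {A B : Finset ℕ}
    (hA : A ∈ F) (hB : B ∈ F) : ¬Disjoint A B :=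
  not_disjoint_iff_nonempty_inter.2 (hF A hA B hB)

theorem Intersecting.sdiff_notMem {F : Finset (Finset ℕ)} (hF : Intersecting F) {S : Finset ℕ}
    (U : Finset ℕ) (hS : S ∈ F) : U \ S ∉ F :=
  fun h => hF.not_disjoint hS h disjoint_sdiff

theorem le_card_filter_disjoint_of_le_beta {n q m : ℕ} {F : Finset (Finset ℕ)}
    (h : m ≤ beta n 0 q F) {Q : Finset ℕ} (hQ : Q ⊆ range n) (hQq : #Q = q) :
    m ≤ #(F.filter (Disjoint Q ·)) :=
  h.trans <| Nat.sInf_le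
    ⟨∅, Q, empty_subset _, hQ, disjoint_empty_left _, card_empty, hQq, by simp [famAB]⟩

section Complement

variable {α : Type*} [DecidableEq α] {U : Finset α} {k : ℕ}

theorem sdiff_mem_powersetCard (hU : #U = 2 * k) {T : Finset α} (hT : T ∈ U.powersetCard k) :
    U \ T ∈ U.powersetCard k := by
  rw [mem_powersetCard] at hT ⊢
  refine ⟨sdiff_subset, ?_⟩
  rw [card_sdiff_of_subset hT.1, hT.2]
  omega

theorem two_mul_card_le_of_intersecting {F : Finset (Finset ℕ)} {U : Finset ℕ}
    (hU : #U = 2 * k) (hF : F ⊆ U.powersetCard k) (hint : Intersecting F) :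
    2 * #F ≤ (2 * k).choose k := by
  have hsub : ∀ S ∈ F, S ⊆ U := fun S hS => (mem_powersetCard.1 (hF hS)).1
  have himage : #(F.image (U \ ·)) = #F :=
    card_image_of_injOn fun S hS S' hS' h => by
      rw [← Finset.sdiff_sdiff_eq_self (hsub S hS), ← Finset.sdiff_sdiff_eq_self (hsub S' hS')]
      exact congrArg (U \ ·) h
  have hdisj : Disjoint F (F.image (U \ ·)) := by
    rw [disjoint_right]
    intro _ hSc hS
    obtain ⟨S, hSF, rfl⟩ := mem_image.1 hSc
    exact hint.sdiff_notMem U hSF hS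
  have hunion : F ∪ F.image (U \ ·) ⊆ U.powersetCard k := by
    refine union_subset hF ?_
    intro _ hSc
    obtain ⟨S, hSF, rfl⟩ := mem_image.1 hSc
    exact sdiff_mem_powersetCard hU (hF hSF)
  calc 2 * #F = #(F ∪ F.image (U \ ·)) := by rw [card_union_of_disjoint hdisj, himage]; ring
    _ ≤ #(U.powersetCard k) := card_le_card hunion
    _ = (2 * k).choose k := by rw [card_powersetCard, hU]

theorem choose_le_two_mul_card {F : Finset (Finset α)} (hU : #U = 2 * k)
    (hcover : ∀ T ∈ U.powersetCard k, T ∈ F ∨ U \ T ∈ F) :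
    (2 * k).choose k ≤ 2 * #F := by
  have hsub : U.powersetCard k ⊆ F ∪ F.image (U \ ·) := by
    intro T hT
    rcases hcover T hT with h | h
    · exact mem_union_left _ h
    · exact mem_union_right _ <|
        mem_image.2 ⟨_, h, Finset.sdiff_sdiff_eq_self (mem_powersetCard.1 hT).1⟩
  calc (2 * k).choose k = #(U.powersetCard k) := by rw [card_powersetCard, hU]
    _ ≤ #(F ∪ F.image (U \ ·)) := card_le_card hsub
    _ ≤ #F + #F := (card_union_le _ _).trans (add_le_add le_rfl card_image_le)
    _ = 2 * #F := by ring

theorem inter_eq_singleton_of_disjoint_erase {S T : Finset α} (hS : S ⊆ U)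
    (hSc : S ≠ U \ T) (hcard : #(U \ T) ≤ #S) {x : α}
    (hdisj : Disjoint (T.erase x) S) : S ∩ T = {x} := by
  have hle : S ∩ T ⊆ {x} := fun a ha => mem_singleton.2 <| by_contra fun hax => by
    rw [mem_inter] at ha
    exact disjoint_left.1 hdisj (mem_erase.2 ⟨hax, ha.2⟩) ha.1
  have hne : (S ∩ T).Nonempty := by
    by_contra hempty
    refine hSc (eq_of_subset_of_card_le (fun a ha => mem_sdiff.2 ⟨hS ha, fun haT => ?_⟩) hcard)
    exact hempty ⟨a, mem_inter.2 ⟨ha, haT⟩⟩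
  exact hne.subset_singleton_iff.1 hle

theorem mul_le_card_filter_card_inter_eq_one {F : Finset (Finset α)} {T : Finset α} {m : ℕ}
    (hU : #U = 2 * k) (hF : F ⊆ U.powersetCard k) (hT : T ∈ U.powersetCard k)
    (hTc : U \ T ∉ F) (hβ : ∀ Q ⊆ U, #Q = k - 1 → m ≤ #(F.filter (Disjoint Q ·))) :
    k * m ≤ #(F.filter fun S => #(S ∩ T) = 1) := by
  obtain ⟨hTU, hTk⟩ := mem_powersetCard.1 hT
  have hfiber : ∀ x ∈ T, m ≤ #(F.filter (· ∩ T = {x})) := fun x hx => by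
    refine (hβ _ ((erase_subset x T).trans hTU) (by rw [card_erase_of_mem hx, hTk])).trans
      (card_le_card fun S hS => ?_)
    obtain ⟨hSF, hdisj⟩ := mem_filter.1 hS
    obtain ⟨hSU, hSk⟩ := mem_powersetCard.1 (hF hSF)
    refine mem_filter.2 ⟨hSF, inter_eq_singleton_of_disjoint_erase hSU ?_ ?_ hdisj⟩
    · rintro rfl
      exact hTc hSF
    · rw [(mem_powersetCard.1 (sdiff_mem_powersetCard hU hT)).2, hSk]
  have hpairwise : (T : Set α).PairwiseDisjoint fun x => F.filter (· ∩ T = {x}) :=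
    fun x _ y _ hxy => disjoint_filter.2 fun S _ hx hy => hxy (singleton_injective (hx ▸ hy))
  calc k * m = ∑ _x ∈ T, m := by rw [sum_const, hTk, smul_eq_mul]
    _ ≤ ∑ x ∈ T, #(F.filter (· ∩ T = {x})) := sum_le_sum hfiber
    _ = #(T.biUnion fun x => F.filter (· ∩ T = {x})) := (card_biUnion hpairwise).symm
    _ ≤ #(F.filter fun S => #(S ∩ T) = 1) := card_le_card fun S hS => by
        obtain ⟨x, -, hS⟩ := mem_biUnion.1 hS
        obtain ⟨hSF, hST⟩ := mem_filter.1 hS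
        exact mem_filter.2 ⟨hSF, by rw [hST, card_singleton]⟩

end Complement

theorem mem_or_sdiff_mem {F : Finset (Finset ℕ)} {U T : Finset ℕ} (hU : #U = 2 * 3)
    (hF : F ⊆ U.powersetCard 3) (hint : Intersecting F)
    (hβ : ∀ Q ⊆ U, #Q = 2 → 2 ≤ #(F.filter (Disjoint Q ·))) (hT : T ∈ U.powersetCard 3) :
    T ∈ F ∨ U \ T ∈ F := by
  by_contra! ⟨hTF, hTcF⟩
  have hTU := (mem_powersetCard.1 hT).1
  have hone := mul_le_card_filter_card_inter_eq_one hU hF hT hTcF hβ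
  have htwo := mul_le_card_filter_card_inter_eq_one hU hF (sdiff_mem_powersetCard hU hT)
    (by rwa [Finset.sdiff_sdiff_eq_self hTU]) hβ
  have hdisj : Disjoint (F.filter fun S => #(S ∩ T) = 1)
      (F.filter fun S => #(S ∩ (U \ T)) = 1) := by
    refine disjoint_filter.2 fun S hSF h1 h2 => ?_
    obtain ⟨hSU, hS3⟩ := mem_powersetCard.1 (hF hSF)
    have hsplit := card_inter_add_card_sdiff S T
    rw [← inter_sdiff_assoc, inter_eq_left.2 hSU] at h2
    omega
  have h12 : 12 ≤ #F := calc
    12 ≤ #((F.filter fun S => #(S ∩ T) = 1) ∪ F.filter fun S => #(S ∩ (U \ T)) = 1) := by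
      rw [card_union_of_disjoint hdisj]; omega
    _ ≤ #F := card_le_card (union_subset (filter_subset _ _) (filter_subset _ _))
  have h10 := two_mul_card_le_of_intersecting hU hF hint
  simp only [show (2 * 3).choose 3 = 20 from rfl] at h10
  omega

theorem six_vertex_characterization_general (F : Finset (Finset ℕ))
    (hF : F ⊆ (Finset.range 6).powersetCard 3)
    (hint : Intersecting F)
    (hbeta : 2 ≤ beta 6 0 2 F) :
    F.card = 10 ∧
    ∀ T ⊆ Finset.range 6, T.card = 3 → (T ∈ F ↔ (Finset.range 6) \ T ∉ F) := by
  have hU : #(range 6) = 2 * 3 := card_range 6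
  have hcover : ∀ T ∈ (range 6).powersetCard 3, T ∈ F ∨ range 6 \ T ∈ F := fun T hT =>
    mem_or_sdiff_mem hU hF hint (fun _ hQ hQ2 => le_card_filter_disjoint_of_le_beta hbeta hQ hQ2) hT
  refine ⟨?_, fun T hT hT3 => ⟨fun h => hint.sdiff_notMem _ h,
    (hcover T (mem_powersetCard.2 ⟨hT, hT3⟩)).resolve_right⟩⟩
  have hupper := two_mul_card_le_of_intersecting hU hF hint
  have hlower := choose_le_two_mul_card hU hcover
  simp only [show (2 * 3).choose 3 = 20 from rfl] at hupper hlower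
  omega

/-- A 3-uniform intersecting family with ground set exactly [6] and β_{0,2} ≥ 2
has 10 members, one from each complementary pair of triples of [6]. -/
theorem six_vertex_characterization (F : Finset (Finset ℕ))
    (hF : F ⊆ (Finset.range 6).powersetCard 3)
    (hground : ∀ x ∈ Finset.range 6, ∃ A ∈ F, x ∈ A)
    (hint : Intersecting F)
    (hbeta : 2 ≤ beta 6 0 2 F) :
    F.card = 10 ∧
    ∀ T ⊆ Finset.range 6, T.card = 3 → (T ∈ F ↔ (Finset.range 6) \ T ∉ F) :=
  six_vertex_characterization_general F hF hint hbeta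
end

section
/- If F is a 3-uniform intersecting family with β_{0,2}(F) ≥ 2 that contains two triples sharing exactly two elements, then the ground set of F has size at most 6. -/
/-!
Write `A = P ∪ {a}`, `B = P ∪ {b}` with `P = A ∩ B`. A member disjoint from the pair `P` meets
both `A` and `B` only in `{a, b}`, so contains `{a, b}`; by `β_{0,2} ≥ 2` there are two of them,
`{a, b, c}` and `{a, b, d}`. The same argument for the pair `{a, b}` gives two members
`{c, d, e}`, and meeting `A` forces `e ∈ P`. So the three disjoint pairs `P`, `{a, b}`, `{c, d}`
each extend, by either element of the next pair (cyclically), to a member of `F`. A triple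
meeting all six of these members either meets each pair or contains a whole pair and meets
the following one; either way it lies in the union of the three pairs.
-/

open Finset

section Cover

variable {α : Type*} [DecidableEq α] {S P Q R : Finset α}

lemma subset_of_disjoint_of_forall_inter_insert_nonempty (hSP : Disjoint S P)
    (h : ∀ w ∈ Q, (S ∩ insert w P).Nonempty) : Q ⊆ S := by
  intro w hw
  obtain ⟨t, ht⟩ := h w hw
  rw [mem_inter, mem_insert] at ht
  obtain ⟨htS, rfl | htP⟩ := ht
  · exact htS
  · exact absurd htP (disjoint_left.mp hSP htS)

lemma one_le_card_inter_or_card_inter_eq_two (hQ : #Q = 2)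
    (h : ∀ w ∈ Q, (S ∩ insert w P).Nonempty) : 1 ≤ #(S ∩ P) ∨ #(S ∩ Q) = 2 := by
  by_cases hSP : Disjoint S P
  · right
    rw [inter_eq_right.mpr (subset_of_disjoint_of_forall_inter_insert_nonempty hSP h), hQ]
  · left
    exact card_pos.mpr (not_disjoint_iff_nonempty_inter.mp hSP)

lemma subset_union_of_forall_inter_insert_nonempty (hS : #S = 3)
    (hP : #P = 2) (hQ : #Q = 2) (hR : #R = 2)
    (hPQ : Disjoint P Q) (hPR : Disjoint P R) (hQR : Disjoint Q R)
    (hSPQ : ∀ w ∈ Q, (S ∩ insert w P).Nonempty) (hSQR : ∀ w ∈ R, (S ∩ insert w Q).Nonempty)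
    (hSRP : ∀ w ∈ P, (S ∩ insert w R).Nonempty) : S ⊆ P ∪ Q ∪ R := by
  have hcard : #(S ∩ (P ∪ Q ∪ R)) = #(S ∩ P) + #(S ∩ Q) + #(S ∩ R) := by
    rw [inter_union_distrib_left, inter_union_distrib_left, card_union_of_disjoint,
      card_union_of_disjoint]
    · exact hPQ.mono inter_subset_right inter_subset_right
    · exact disjoint_union_left.mpr
        ⟨hPR.mono inter_subset_right inter_subset_right,
          hQR.mono inter_subset_right inter_subset_right⟩
  have hPQ' := one_le_card_inter_or_card_inter_eq_two hQ hSPQ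
  have hQR' := one_le_card_inter_or_card_inter_eq_two hR hSQR
  have hRP' := one_le_card_inter_or_card_inter_eq_two hP hSRP
  have hle : #S ≤ #(S ∩ (P ∪ Q ∪ R)) := by omega
  exact inter_eq_left.mp (eq_of_subset_of_card_le inter_subset_left hle)

end Cover

def ExtendsBy (F : Finset (Finset ℕ)) (P Q : Finset ℕ) : Prop :=
  ∀ w ∈ Q, insert w P ∈ F

section Family

variable {F : Finset (Finset ℕ)} {P Q : Finset ℕ}

lemma exists_extendsBy_inter {A B : Finset ℕ} (hunif : ∀ A ∈ F, #A = 3)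
    (hA : A ∈ F) (hB : B ∈ F) (hAB : #(A ∩ B) = 2) :
    ∃ Q, #Q = 2 ∧ Disjoint (A ∩ B) Q ∧ ExtendsBy F (A ∩ B) Q := by
  obtain ⟨a, haP, hAa⟩ := exists_eq_insert_iff.mpr
    ⟨(inter_subset_left : A ∩ B ⊆ A), by rw [hAB, hunif A hA]⟩
  obtain ⟨b, hbP, hBb⟩ := exists_eq_insert_iff.mpr
    ⟨(inter_subset_right : A ∩ B ⊆ B), by rw [hAB, hunif B hB]⟩
  have hab : a ≠ b := by
    rintro rfl
    rw [hAa.symm.trans hBb, inter_self, hunif B hB] at hAB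
    exact absurd hAB (by norm_num)
  refine ⟨{a, b}, card_pair hab, by simp [haP, hbP], ?_⟩
  intro w hw
  rw [mem_insert, mem_singleton] at hw
  rcases hw with rfl | rfl
  · rwa [hAa]
  · rwa [hBb]

lemma ExtendsBy.exists_extendsBy (hunif : ∀ A ∈ F, #A = 3) (hint : Intersecting F)
    (hbeta : ∀ Q ⊆ F.sup id, #Q = 2 → 2 ≤ #(F.filter fun S => Disjoint S Q))
    (hPQ : ExtendsBy F P Q) (hP : #P = 2) (hQ : #Q = 2) :
    ∃ R, #R = 2 ∧ Disjoint P R ∧ Disjoint Q R ∧ ExtendsBy F Q R := by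
  obtain ⟨q, hq⟩ : Q.Nonempty := card_pos.mp (by omega)
  have hPground : P ⊆ F.sup id := (subset_insert q P).trans (le_sup (f := id) (hPQ q hq))
  have third : ∀ S ∈ F, Disjoint S P → ∃ c ∉ Q, c ∉ P ∧ S = insert c Q := by
    intro S hS hSP
    have hQS := subset_of_disjoint_of_forall_inter_insert_nonempty hSP
      fun w hw => hint S hS _ (hPQ w hw)
    obtain ⟨c, hcQ, rfl⟩ := exists_eq_insert_iff.mpr ⟨hQS, by rw [hQ, hunif S hS]⟩
    exact ⟨c, hcQ, disjoint_left.mp hSP (mem_insert_self c Q), rfl⟩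
  obtain ⟨S₁, hS₁, S₂, hS₂, hne⟩ := one_lt_card.mp (hbeta P hPground hP)
  rw [mem_filter] at hS₁ hS₂
  obtain ⟨c, hcQ, hcP, rfl⟩ := third S₁ hS₁.1 hS₁.2
  obtain ⟨d, hdQ, hdP, rfl⟩ := third S₂ hS₂.1 hS₂.2
  have hcd : c ≠ d := by
    rintro rfl
    exact hne rfl
  refine ⟨{c, d}, card_pair hcd, by simp [hcP, hdP], by simp [hcQ, hdQ], ?_⟩
  intro w hw
  rw [mem_insert, mem_singleton] at hw
  rcases hw with rfl | rfl
  · exact hS₁.1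
  · exact hS₂.1

lemma ExtendsBy.eq_of_extendsBy {R R' : Finset ℕ} (hint : Intersecting F)
    (hPQ : ExtendsBy F P Q) (hRR' : ExtendsBy F R R') (hQ : Q.Nonempty)
    (hP : #P = 2) (hR' : #R' = 2)
    (hPR : Disjoint P R) (hQR : Disjoint Q R) (hQR' : Disjoint Q R') : R' = P := by
  refine eq_of_subset_of_card_le (fun w hw => ?_) (by rw [hP, hR'])
  obtain ⟨q, hq⟩ := hQ
  obtain ⟨t, ht⟩ := hint _ (hRR' w hw) _ (hPQ q hq)
  rw [mem_inter, mem_insert, mem_insert] at ht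
  obtain ⟨rfl | htR, rfl | htP⟩ := ht
  · exact absurd hw (disjoint_left.mp hQR' hq)
  · exact htP
  · exact absurd htR (disjoint_left.mp hQR hq)
  · exact absurd htR (disjoint_left.mp hPR htP)

end Family

/-- A 3-uniform intersecting family with β_{0,2} ≥ 2 containing two triples sharing
exactly two elements has ground set of size at most 6. -/
theorem ground_le_six_of_two_shared (F : Finset (Finset ℕ))
    (hunif : ∀ A ∈ F, A.card = 3)
    (hint : Intersecting F)
    (hbeta : ∀ Q ⊆ F.sup id, Q.card = 2 → 2 ≤ (F.filter fun S => Disjoint S Q).card)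
    (hpair : ∃ A ∈ F, ∃ B ∈ F, (A ∩ B).card = 2) :
    (F.sup id).card ≤ 6 := by
  obtain ⟨A, hA, B, hB, hP⟩ := hpair
  set P := A ∩ B
  obtain ⟨Q, hQ, hPQ, hPQF⟩ := exists_extendsBy_inter hunif hA hB hP
  obtain ⟨R, hR, hPR, hQR, hQRF⟩ := hPQF.exists_extendsBy hunif hint hbeta hP hQ
  obtain ⟨P', hP', hQP', -, hRP'F⟩ := hQRF.exists_extendsBy hunif hint hbeta hQ hR
  obtain rfl : P' = P :=
    hPQF.eq_of_extendsBy hint hRP'F (card_pos.mp (by omega)) hP hP' hPR hQR hQP'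
  have hground : F.sup id ⊆ P ∪ Q ∪ R := Finset.sup_le fun S hS =>
    subset_union_of_forall_inter_insert_nonempty (hunif S hS) hP hQ hR hPQ hPR hQR
      (fun w hw => hint S hS _ (hPQF w hw)) (fun w hw => hint S hS _ (hQRF w hw))
      (fun w hw => hint S hS _ (hRP'F w hw))
  calc #(F.sup id) ≤ #(P ∪ Q ∪ R) := card_le_card hground
    _ ≤ #P + #Q + #R := (card_union_le _ _).trans (Nat.add_le_add_right (card_union_le P Q) _)
    _ = 6 := by rw [hP, hQ, hR]
end

section
/- Let k ≥ p + 2 and define F = {S ∈ binomial([n],k) : |S ∩ {1,2,3}| ≥ 2}. Then F is intersecting and for n sufficiently large, β_{p,1}(F) = binomial(n - 3 - p, k - 2 - p). -/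
open Finset

theorem Nat.choose_le_choose_add_add (a b d : ℕ) : a.choose b ≤ (a + d).choose (b + d) := by
  induction d with
  | zero => rfl
  | succ d ih =>
    calc a.choose b ≤ (a + d).choose (b + d) := ih
      _ ≤ (a + d + 1).choose (b + d + 1) := by
        rw [Nat.choose_succ_succ]; exact Nat.le_add_right _ _

theorem famAB_powersetCard_eq (U C D : Finset ℕ) (k : ℕ) :
    famAB (U.powersetCard k) C D = ((U \ D).powersetCard k).filter (C ⊆ ·) := by
  ext S
  simp only [famAB, mem_filter, mem_powersetCard, subset_sdiff]
  exact ⟨fun ⟨⟨hSU, hSk⟩, hCS, hDS⟩ => ⟨⟨⟨hSU, hDS.symm⟩, hSk⟩, hCS⟩,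
    fun ⟨⟨⟨hSU, hSD⟩, hSk⟩, hCS⟩ => ⟨⟨hSU, hSk⟩, hCS, hSD.symm⟩⟩

theorem card_famAB_powersetCard {U C D : Finset ℕ} {k : ℕ} (hCU : C ⊆ U) (hCD : Disjoint C D)
    (hCk : #C ≤ k) : #(famAB (U.powersetCard k) C D) = (#(U \ D) - #C).choose (k - #C) := by
  rw [famAB_powersetCard_eq,
    card_filter_powersetCard_subset _ _ _ (subset_sdiff.2 ⟨hCU, hCD⟩) hCk]

def thresholdFamily (U T : Finset ℕ) (k t : ℕ) : Finset (Finset ℕ) :=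
  (U.powersetCard k).filter fun S => t ≤ #(S ∩ T)

section thresholdFamily

variable {U T A B : Finset ℕ} {k t : ℕ}

theorem thresholdFamily_intersecting (hT : #T < 2 * t) :
    Intersecting (thresholdFamily U T k t) := by
  intro S hS R hR
  simp only [thresholdFamily, mem_filter] at hS hR
  have hmeet : ((S ∩ T) ∩ (R ∩ T)).Nonempty :=
    inter_nonempty_of_card_lt_card_add_card inter_subset_right inter_subset_right (by omega)
  exact hmeet.mono (inter_subset_inter inter_subset_left inter_subset_left)

theorem famAB_union_subset_famAB_thresholdFamily {E : Finset ℕ} (hET : E ⊆ T) (hEt : t ≤ #E) :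
    famAB (U.powersetCard k) (A ∪ E) B ⊆ famAB (thresholdFamily U T k t) A B := by
  intro S hS
  simp only [famAB, thresholdFamily, mem_filter, union_subset_iff] at hS ⊢
  obtain ⟨hSk, ⟨hAS, hES⟩, hBS⟩ := hS
  exact ⟨⟨hSk, hEt.trans (card_le_card (subset_inter hES hET))⟩, hAS, hBS⟩

theorem famAB_thresholdFamily_eq (hTB : #(T \ B) = t) :
    famAB (thresholdFamily U T k t) A B = famAB (U.powersetCard k) (A ∪ T \ B) B := by
  refine Subset.antisymm ?_ (famAB_union_subset_famAB_thresholdFamily sdiff_subset hTB.ge)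
  intro S hS
  simp only [famAB, thresholdFamily, mem_filter, union_subset_iff] at hS ⊢
  obtain ⟨⟨hSk, hST⟩, hAS, hBS⟩ := hS
  have hSTB : S ∩ T ⊆ T \ B := fun x hx =>
    mem_sdiff.2 ⟨mem_of_mem_inter_right hx, disjoint_right.1 hBS (mem_of_mem_inter_left hx)⟩
  have hTBS : T \ B ⊆ S := (eq_of_subset_of_card_le hSTB (by omega)) ▸ inter_subset_left
  exact ⟨hSk, ⟨hAS, hTBS⟩, hBS⟩

theorem card_famAB_thresholdFamily (hAU : A ⊆ U) (hTU : T ⊆ U) (hAT : Disjoint A T)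
    (hAB : Disjoint A B) (hTB : #(T \ B) = t) (hk : #A + t ≤ k) :
    #(famAB (thresholdFamily U T k t) A B) = (#(U \ B) - (#A + t)).choose (k - (#A + t)) := by
  have hC : #(A ∪ T \ B) = #A + t := by
    rw [card_union_of_disjoint (hAT.mono_right sdiff_subset), hTB]
  rw [famAB_thresholdFamily_eq hTB, card_famAB_powersetCard _ _ (by omega), hC]
  · exact union_subset hAU (sdiff_subset.trans hTU)
  · exact disjoint_union_left.2 ⟨hAB, sdiff_disjoint⟩

theorem choose_le_card_famAB_thresholdFamily (hAU : A ⊆ U) (hTU : T ⊆ U) (hAB : Disjoint A B)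
    (htB : t ≤ #(T \ B)) (hk : #A + t ≤ k) (hU : #A + t ≤ #(U \ B)) :
    (#(U \ B) - (#A + t)).choose (k - (#A + t)) ≤ #(famAB (thresholdFamily U T k t) A B) := by
  obtain ⟨E, hETB, hEt⟩ := exists_subset_card_eq htB
  have hCA : #A ≤ #(A ∪ E) := card_le_card subset_union_left
  have hCt : #(A ∪ E) ≤ #A + t := hEt ▸ card_union_le A E
  have hcount : #(famAB (U.powersetCard k) (A ∪ E) B) =
      (#(U \ B) - #(A ∪ E)).choose (k - #(A ∪ E)) := by
    refine card_famAB_powersetCard (union_subset hAU (hETB.trans (sdiff_subset.trans hTU))) ?_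
      (by omega)
    exact disjoint_union_left.2 ⟨hAB, disjoint_of_subset_left hETB sdiff_disjoint⟩
  set d := #A + t - #(A ∪ E)
  calc (#(U \ B) - (#A + t)).choose (k - (#A + t))
      ≤ (#(U \ B) - (#A + t) + d).choose (k - (#A + t) + d) := Nat.choose_le_choose_add_add _ _ _
    _ = #(famAB (U.powersetCard k) (A ∪ E) B) := by rw [hcount]; congr 1 <;> omega
    _ ≤ #(famAB (thresholdFamily U T k t) A B) :=
        card_le_card (famAB_union_subset_famAB_thresholdFamily (hETB.trans sdiff_subset) hEt.ge)

end thresholdFamily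

/-- The family of k-sets in [n] meeting {0,1,2} in at least 2 elements is intersecting,
and for large n its (p,1)-dömdödöm equals binom(n-3-p, k-2-p). -/
theorem beta_p_one_lower (p k : ℕ) (hk : p + 2 ≤ k) :
    (∀ n : ℕ, Intersecting
      (((Finset.range n).powersetCard k).filter fun S =>
        2 ≤ (S ∩ ({0, 1, 2} : Finset ℕ)).card)) ∧
    ∃ n₀ : ℕ, ∀ n ≥ n₀,
      beta n p 1 (((Finset.range n).powersetCard k).filter fun S =>
        2 ≤ (S ∩ ({0, 1, 2} : Finset ℕ)).card) =
      Nat.choose (n - 3 - p) (k - 2 - p) := by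
  refine ⟨fun n => thresholdFamily_intersecting (by decide), p + 3, fun n hn => ?_⟩
  change beta n p 1 (thresholdFamily (range n) {0, 1, 2} k 2) = _
  have hTU : ({0, 1, 2} : Finset ℕ) ⊆ range n := by
    intro x; simp only [mem_insert, mem_singleton, mem_range]; omega
  have hUB {B : Finset ℕ} (hB : B ⊆ range n) (hB1 : #B = 1) : #(range n \ B) = n - 1 := by
    rw [card_sdiff_of_subset hB, card_range, hB1]
  have hA₀U : Ico 3 (p + 3) ⊆ range n := by
    intro x; simp only [mem_Ico, mem_range]; omega
  have hA₀ : #(Ico 3 (p + 3)) = p := by simp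
  have h0U : {0} ⊆ range n := singleton_subset_iff.2 (mem_range.2 (by omega))
  refine IsLeast.csInf_eq ⟨⟨Ico 3 (p + 3), {0}, hA₀U, h0U, by simp, hA₀, rfl, ?_⟩, ?_⟩
  · have hA₀T : Disjoint (Ico 3 (p + 3)) {0, 1, 2} := by
      rw [disjoint_left]; intro x; simp only [mem_Ico, mem_insert, mem_singleton]; omega
    rw [card_famAB_thresholdFamily hA₀U hTU hA₀T (by simp) (by decide) (by omega),
      hUB h0U rfl, hA₀]
    congr 1 <;> omega
  · rintro _ ⟨A, B, hAU, hBU, hAB, hAp, hB1, rfl⟩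
    have htB : 2 ≤ #(({0, 1, 2} : Finset ℕ) \ B) := by
      simpa [hB1] using le_card_sdiff B ({0, 1, 2} : Finset ℕ)
    calc (n - 3 - p).choose (k - 2 - p) = (#(range n \ B) - (#A + 2)).choose (k - (#A + 2)) := by
          rw [hUB hBU hB1, hAp]; congr 1 <;> omega
      _ ≤ _ := choose_le_card_famAB_thresholdFamily hAU hTU hAB htB (by omega)
          (by rw [hUB hBU hB1]; omega)
end
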